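/- arXiv:1705.09372 — 2 statements merged into one kernel-verified Lean document; each statement's English description precedes it below -/
import Mathlib

section
/- Fix an integer m ≥ 1, ε ∈ (0,1), and α > 0. Let X^n be uniformly distributed on {0,1}^n and let Y_(1)^n, …, Y_(m)^n be obtained from X^n by passing it through m independent binary erasure channels with erasure probability ε. For each i and each realization of Y_(i)^n, let G(·|Y_(i)^n) be a guessing function for the conditional distribution of X^n given Y_(i)^n. Then lim_{n→∞} (1/n) log₂ E[ min_{i=1,…,m} G(X^n|Y_(i)^n)^α ] = sup_{λ∈[0,1]} ( αλ − m·D(λ‖ε) ). -/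
open Real Filter Finset

/-- Binary Rényi entropy of order `β` (base-2 logarithm). -/
noncomputable def Hb (β p : ℝ) : ℝ := (1 / (1 - β)) * Real.logb 2 (p ^ β + (1 - p) ^ β)

/-- Binary KL divergence `D(p‖q)` in bits (Lean's `logb 2 0 = 0` gives the `0·log 0 = 0` convention). -/
noncomputable def Dkl (p q : ℝ) : ℝ :=
  p * Real.logb 2 (p / q) + (1 - p) * Real.logb 2 ((1 - p) / (1 - q))

/-- Binary Shannon entropy in bits. -/
noncomputable def binEnt (p : ℝ) : ℝ := -(p * Real.logb 2 p) - (1 - p) * Real.logb 2 (1 - p)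

/-- `G` is a guessing function for the distribution `q` on the finite set `S`:
a bijection onto `{1, …, |S|}` ranking more likely elements first. -/
def IsGuessingFunction {S : Type*} [Fintype S] (q : S → ℝ) (G : S → ℕ) : Prop :=
  Function.Injective G ∧ (∀ x, G x ∈ Finset.Icc 1 (Fintype.card S)) ∧
    ∀ x y, q y < q x → G x < G y

/-- Distribution of `n` i.i.d. Bernoulli(`p`) bits (`true` has probability `p`). -/
noncomputable def bernDist (p : ℝ) (n : ℕ) (x : Fin n → Bool) : ℝ :=
  ∏ i, if x i then p else 1 - p

/-- Transition probability of a binary erasure channel with erasure probability `ε`: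
`none` is the erasure symbol. -/
noncomputable def becPr (ε : ℝ) (b : Bool) : Option Bool → ℝ
  | none => ε
  | some b' => if b' = b then 1 - ε else 0

/-- Joint distribution of a uniform `X^n` and the outputs `Y' = (Y₍₁₎,…,Y₍ₘ₎)` of `m`
independent BEC(`ε`) channels applied to `X^n`. -/
noncomputable def becJoint (ε : ℝ) (m n : ℕ) (x : Fin n → Bool)
    (y : Fin m → Fin n → Option Bool) : ℝ :=
  ((1 : ℝ) / 2) ^ n * ∏ j, ∏ i, becPr ε (x i) (y j i)

/-- Conditional distribution of `X^n` given `Y' = y` (junk value `0` off the support of `Y'`). -/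
noncomputable def becCond (ε : ℝ) (m n : ℕ) (y : Fin m → Fin n → Option Bool)
    (x : Fin n → Bool) : ℝ :=
  becJoint ε m n x y / ∑ x', becJoint ε m n x' y

/-- Joint distribution of a uniform `X^n` and the output of a single BEC(`ε`). -/
noncomputable def becJoint1 (ε : ℝ) (n : ℕ) (x : Fin n → Bool) (y : Fin n → Option Bool) : ℝ :=
  ((1 : ℝ) / 2) ^ n * ∏ i, becPr ε (x i) (y i)

/-- Conditional distribution of `X^n` given the output `y` of a single BEC(`ε`). -/
noncomputable def becCond1 (ε : ℝ) (n : ℕ) (y : Fin n → Option Bool) (x : Fin n → Bool) : ℝ :=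
  becJoint1 ε n x y / ∑ x', becJoint1 ε n x' y

/-!
Upper bound: a guessing function for the BEC posterior ranks the true input among the `2 ^ E`
strings compatible with the `E` erasures it sees, so `min_j G_j ≤ (∏_j G_j) ^ (1 / m)
≤ 2 ^ ((E₁ + ⋯ + E_m) / m)`; as the channels erase independently,
`E[2 ^ (α (E₁ + ⋯ + E_m) / m)] = (ε 2 ^ (α / m) + 1 - ε) ^ (n m)`.

Lower bound: condition on every channel erasing exactly `k` coordinates. For each pattern of
unerased bits an agent ranks at most `v` strings within its first `v` guesses, so at most
`m 2 ^ (n - k) v` inputs have `min_j G_j ≤ v`; with `v = ⌊2 ^ k / (2 m)⌋` that is at most half of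
them. This event has probability `(C(n, k) ε ^ k (1 - ε) ^ (n - k)) ^ m`, and the best `k`
captures `(ε 2 ^ (α / m) + 1 - ε) ^ n` up to a factor `n + 1`.

Both exponents equal `m log₂ (ε 2 ^ (α / m) + 1 - ε)`, the value of the supremum by the
variational (Donsker–Varadhan) formula for `D(·‖ε)`.
-/

lemma mul_logb_self_div (b x : ℝ) {y : ℝ} (hy : y ≠ 0) :
    x * logb b (x / y) = x * logb b x - x * logb b y := by
  rcases eq_or_ne x 0 with rfl | hx
  · simp
  · rw [logb_div hx hy, mul_sub]

lemma mul_logb_div_self (b : ℝ) {x : ℝ} (y : ℝ) (hx : x ≠ 0) :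
    y * logb b (x / y) = y * logb b x - y * logb b y := by
  rcases eq_or_ne y 0 with rfl | hy
  · simp
  · rw [logb_div hx hy, mul_sub]

lemma mul_logb_div_add_le_logb_add {B a b l : ℝ} (hB : 1 < B) (ha : 0 < a) (hb : 0 < b)
    (hl : l ∈ Set.Icc (0 : ℝ) 1) :
    l * logb B (a / l) + (1 - l) * logb B (b / (1 - l)) ≤ logb B (a + b) := by
  obtain ⟨hl0, hl1⟩ := hl
  rcases hl0.eq_or_lt with rfl | hl0
  · simpa using logb_le_logb_of_le hB hb (by linarith)
  rcases hl1.eq_or_lt with rfl | hl1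
  · simpa using logb_le_logb_of_le hB ha (by linarith)
  have h1l : 0 < 1 - l := by linarith
  have hconc := strictConcaveOn_log_Ioi.concaveOn.2 (Set.mem_Ioi.2 (div_pos ha hl0))
    (Set.mem_Ioi.2 (div_pos hb h1l)) hl0.le h1l.le (by ring)
  simp only [smul_eq_mul, mul_div_cancel₀ _ hl0.ne', mul_div_cancel₀ _ h1l.ne'] at hconc
  simp only [logb, ← mul_div_assoc, ← add_div]
  exact div_le_div_of_nonneg_right hconc (log_pos hB).le

lemma mul_sub_Dkl_eq {ε : ℝ} (hε : ε ∈ Set.Ioo (0 : ℝ) 1) (t l : ℝ) :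
    t * l - Dkl l ε
      = l * logb 2 (ε * 2 ^ t / l) + (1 - l) * logb 2 ((1 - ε) / (1 - l)) := by
  obtain ⟨hε0, hε1⟩ := hε
  have h2t : (2 : ℝ) ^ t ≠ 0 := (rpow_pos_of_pos two_pos t).ne'
  rw [Dkl, mul_logb_self_div _ _ hε0.ne', mul_logb_self_div _ _ (by linarith),
    mul_logb_div_self _ _ (by positivity), mul_logb_div_self _ _ (by linarith),
    logb_mul hε0.ne' h2t, logb_rpow two_pos (by norm_num)]
  ring

theorem iSup_mul_sub_Dkl (t : ℝ) {ε : ℝ} (hε : ε ∈ Set.Ioo (0 : ℝ) 1) :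
    ⨆ l : Set.Icc (0 : ℝ) 1, (t * l - Dkl l ε) = logb 2 (ε * 2 ^ t + (1 - ε)) := by
  set a := ε * (2 : ℝ) ^ t
  have ha : 0 < a := mul_pos hε.1 (rpow_pos_of_pos two_pos t)
  have hb : 0 < 1 - ε := by linarith [hε.2]
  have hbound (l : Set.Icc (0 : ℝ) 1) : t * l - Dkl l ε ≤ logb 2 (a + (1 - ε)) := by
    rw [mul_sub_Dkl_eq hε]
    exact mul_logb_div_add_le_logb_add one_lt_two ha hb l.2
  -- the supremum is attained at the tilted parameter `a / (a + (1 - ε))`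
  set l₀ := a / (a + (1 - ε))
  have hl₀ : l₀ ∈ Set.Icc (0 : ℝ) 1 :=
    ⟨by positivity, (div_le_one (by positivity)).2 (by linarith)⟩
  have hattain : t * l₀ - Dkl l₀ ε = logb 2 (a + (1 - ε)) := by
    have h1 : a / l₀ = a + (1 - ε) := div_div_cancel₀ ha.ne'
    have h2 : (1 - ε) / (1 - l₀) = a + (1 - ε) := by
      rw [one_sub_div (by positivity), add_sub_cancel_left, div_div_cancel₀ hb.ne']
    rw [mul_sub_Dkl_eq hε, h1, h2]
    ring
  refine le_antisymm (ciSup_le hbound) ?_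
  exact le_ciSup_of_le ⟨_, Set.forall_mem_range.2 hbound⟩ ⟨l₀, hl₀⟩ hattain.ge

namespace IsGuessingFunction

variable {S : Type*} [Fintype S] {q : S → ℝ} {G : S → ℕ}

lemma image_univ [DecidableEq S] (hG : IsGuessingFunction q G) :
    univ.image G = Icc 1 (Fintype.card S) := by
  refine eq_of_subset_of_card_le (fun v hv => ?_) ?_
  · obtain ⟨x, -, rfl⟩ := mem_image.1 hv
    exact hG.2.1 x
  · rw [card_image_of_injective _ hG.1, Nat.card_Icc, card_univ]
    omega

lemma le_card_filter_pos (hG : IsGuessingFunction q G) {x : S} (hx : 0 < q x) :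
    G x ≤ #{x' | 0 < q x'} := by
  classical
  have hsub : Icc 1 (G x) ⊆ ({x' | 0 < q x'} : Finset S).image G := by
    intro v hv
    have hGx := mem_Icc.1 (hG.2.1 x)
    have hv' := mem_Icc.1 hv
    obtain ⟨x', -, rfl⟩ :=
      mem_image.1 (hG.image_univ ▸ mem_Icc.2 ⟨hv'.1, hv'.2.trans hGx.2⟩)
    refine mem_image.2 ⟨x', mem_filter.2 ⟨mem_univ _, ?_⟩, rfl⟩
    by_contra hq
    have := hG.2.2 x x' (by linarith)
    omega
  calc G x = #(Icc 1 (G x)) := by simp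
    _ ≤ _ := (card_le_card hsub).trans card_image_le

end IsGuessingFunction

def becCompatible {n : ℕ} (y : Fin n → Option Bool) : Finset (Fin n → Bool) :=
  Fintype.piFinset fun i => (y i).elim univ singleton

lemma card_becCompatible {n : ℕ} (y : Fin n → Option Bool) :
    #(becCompatible y) = 2 ^ #{i | y i = none} := by
  rw [becCompatible, Fintype.card_piFinset, card_filter, ← prod_pow_eq_pow_sum]
  refine prod_congr rfl fun i _ => ?_
  cases y i <;> simp

section BEC

variable {ε : ℝ}

lemma becPr_nonneg (hε : ε ∈ Set.Icc (0 : ℝ) 1) (b : Bool) (o : Option Bool) :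
    0 ≤ becPr ε b o := by
  cases o <;> simp only [becPr] <;> [exact hε.1; split_ifs <;> linarith [hε.2]]

lemma becJoint_nonneg (hε : ε ∈ Set.Icc (0 : ℝ) 1) {m n : ℕ} (x : Fin n → Bool)
    (y : Fin m → Fin n → Option Bool) : 0 ≤ becJoint ε m n x y :=
  mul_nonneg (by positivity) (prod_nonneg fun j _ => prod_nonneg fun i _ => becPr_nonneg hε _ _)

lemma becPr_ne_zero_iff (hε : ε ∈ Set.Ioo (0 : ℝ) 1) (b : Bool) (o : Option Bool) :
    becPr ε b o ≠ 0 ↔ b ∈ o.elim univ singleton := by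
  cases o <;> simp [becPr, hε.1.ne', (sub_pos.2 hε.2).ne, eq_comm]

lemma prod_becPr_ne_zero_iff (hε : ε ∈ Set.Ioo (0 : ℝ) 1) {n : ℕ} (x : Fin n → Bool)
    (y : Fin n → Option Bool) :
    ∏ i, becPr ε (x i) (y i) ≠ 0 ↔ x ∈ becCompatible y := by
  simp [prod_ne_zero_iff, becCompatible, Fintype.mem_piFinset, becPr_ne_zero_iff hε]

lemma becCond1_pos_iff (hε : ε ∈ Set.Ioo (0 : ℝ) 1) {n : ℕ} (y : Fin n → Option Bool)
    (x : Fin n → Bool) : 0 < becCond1 ε n y x ↔ x ∈ becCompatible y := by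
  have hnonneg (x' : Fin n → Bool) : 0 ≤ becJoint1 ε n x' y :=
    mul_nonneg (by positivity)
      (prod_nonneg fun i _ => becPr_nonneg (Set.Ioo_subset_Icc_self hε) _ _)
  have hne : becJoint1 ε n x y ≠ 0 ↔ x ∈ becCompatible y := by
    rw [becJoint1, mul_ne_zero_iff, prod_becPr_ne_zero_iff hε]
    simp
  refine ⟨fun h => hne.1 fun h0 => by simp [becCond1, h0] at h, fun h => ?_⟩
  have hpos := (hnonneg x).lt_of_ne (hne.2 h).symm
  exact div_pos hpos (hpos.trans_le (single_le_sum (fun x' _ => hnonneg x') (mem_univ x)))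

lemma IsGuessingFunction.le_two_pow_card_erasures (hε : ε ∈ Set.Ioo (0 : ℝ) 1) {n : ℕ}
    {y : Fin n → Option Bool} {Gf : (Fin n → Bool) → ℕ}
    (hG : IsGuessingFunction (becCond1 ε n y) Gf) {x : Fin n → Bool}
    (hx : x ∈ becCompatible y) : Gf x ≤ 2 ^ #{i | y i = none} := by
  have := hG.le_card_filter_pos ((becCond1_pos_iff hε y x).2 hx)
  rwa [filter_congr fun x' _ => becCond1_pos_iff hε y x', filter_mem_eq_inter, univ_inter,
    card_becCompatible] at this

end BEC

lemma rpow_iInf_le_prod_rpow {ι : Type*} [Fintype ι] [Nonempty ι] (g : ι → ℕ) {α : ℝ}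
    (hα : 0 ≤ α) :
    ((⨅ i, g i : ℕ) : ℝ) ^ α ≤ ∏ i, (g i : ℝ) ^ (α / Fintype.card ι) := by
  have hcard : (Fintype.card ι : ℝ) ≠ 0 := by positivity
  calc ((⨅ i, g i : ℕ) : ℝ) ^ α
        = ∏ _i : ι, ((⨅ i, g i : ℕ) : ℝ) ^ (α / Fintype.card ι) := by
        rw [prod_const, card_univ, ← rpow_natCast, ← rpow_mul (Nat.cast_nonneg _),
          div_mul_cancel₀ _ hcard]
    _ ≤ ∏ i, (g i : ℝ) ^ (α / Fintype.card ι) :=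
        prod_le_prod (fun _ _ => by positivity) fun i _ =>
          rpow_le_rpow (Nat.cast_nonneg _) (by exact_mod_cast ciInf_le (OrderBot.bddBelow _) i)
            (by positivity)

lemma card_filter_iInf_le_le_sum {ι α : Type*} [Fintype ι] [Nonempty ι] [Fintype α]
    (f : ι → α → ℕ) (v : ℕ) :
    #{x | ⨅ i, f i x ≤ v} ≤ ∑ i, #{x | f i x ≤ v} := by
  classical
  refine (card_le_card fun x hx => ?_).trans card_biUnion_le
  obtain ⟨i, hi⟩ := exists_lt_of_ciInf_lt (Nat.lt_succ_of_le (mem_filter.1 hx).2)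
  exact mem_biUnion.2 ⟨i, mem_univ i, mem_filter.2 ⟨mem_univ x, Nat.le_of_lt_succ hi⟩⟩

lemma card_div_two_mul_rpow_le_sum {ι : Type*} (s : Finset ι) (f : ι → ℕ) {r α : ℝ}
    (hr : 0 ≤ r) (hα : 0 ≤ α) (hsmall : (#{x ∈ s | f x ≤ ⌊r⌋₊} : ℝ) ≤ #s / 2) :
    #s / 2 * r ^ α ≤ ∑ x ∈ s, (f x : ℝ) ^ α := by
  classical
  have hsplit := card_filter_add_card_filter_not (s := s) fun x => f x ≤ ⌊r⌋₊
  have hlarge : (#s : ℝ) / 2 ≤ #{x ∈ s | ¬ f x ≤ ⌊r⌋₊} := by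
    rw [← hsplit, Nat.cast_add] at hsmall ⊢
    linarith
  calc #s / 2 * r ^ α ≤ #{x ∈ s | ¬ f x ≤ ⌊r⌋₊} * r ^ α := by gcongr
    _ ≤ ∑ x ∈ s with ¬ f x ≤ ⌊r⌋₊, (f x : ℝ) ^ α := by
        rw [← nsmul_eq_mul]
        refine card_nsmul_le_sum _ _ _ fun x hx => rpow_le_rpow hr ?_ hα
        exact (Nat.lt_floor_add_one r).le.trans (by exact_mod_cast not_le.1 (mem_filter.1 hx).2)
    _ ≤ ∑ x ∈ s, (f x : ℝ) ^ α :=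
        sum_le_sum_of_subset_of_nonneg (filter_subset _ _) fun _ _ _ => by positivity

lemma exists_add_pow_div_le_choose_mul (a b : ℝ) (n : ℕ) :
    ∃ k ≤ n, (a + b) ^ n / (n + 1) ≤ a ^ k * b ^ (n - k) * n.choose k := by
  have hsum : ∑ _k ∈ range (n + 1), (a + b) ^ n / (n + 1)
      ≤ ∑ k ∈ range (n + 1), a ^ k * b ^ (n - k) * n.choose k := by
    rw [← add_pow, sum_const, card_range, nsmul_eq_mul]
    field_simp
    push_cast
    exact (mul_comm _ _).le
  obtain ⟨k, hk, hle⟩ := exists_le_of_sum_le nonempty_range_add_one hsum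
  exact ⟨k, Nat.lt_succ_iff.1 (mem_range.1 hk), hle⟩

lemma tendsto_logb_natCast_add_one_div :
    Tendsto (fun n : ℕ => logb 2 (n + 1) / n) atTop (nhds 0) := by
  have hlog := (tendsto_pow_log_div_mul_add_atTop 1 (-1) 1 one_ne_zero).comp
    (tendsto_atTop_add_const_right atTop 1 tendsto_natCast_atTop_atTop)
  simpa [Function.comp_def, logb, div_div_eq_mul_div, div_right_comm] using
    hlog.div_const (log 2)

theorem tendsto_inv_mul_logb_of_pow_div_le_of_le_pow {a : ℕ → ℝ} {b K : ℝ} (hb : 0 < b)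
    (hK : 0 < K) (d : ℕ) (hlo : ∀ n : ℕ, b ^ n / (K * (n + 1) ^ d) ≤ a n)
    (hhi : ∀ n, a n ≤ b ^ n) :
    Tendsto (fun n : ℕ => 1 / (n : ℝ) * logb 2 (a n)) atTop (nhds (logb 2 b)) := by
  have hpos (n : ℕ) : 0 < a n := (by positivity : (0 : ℝ) < _).trans_le (hlo n)
  have hgap : Tendsto (fun n : ℕ => logb 2 b - (logb 2 K / n + d * (logb 2 (n + 1) / n)))
      atTop (nhds (logb 2 b)) := by
    simpa using tendsto_const_nhds.sub
      ((tendsto_const_div_atTop_nhds_zero_nat _).add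
        (tendsto_logb_natCast_add_one_div.const_mul (d : ℝ)))
  refine tendsto_of_tendsto_of_tendsto_of_le_of_le' hgap tendsto_const_nhds ?_ ?_
  all_goals filter_upwards [eventually_gt_atTop 0] with n hn
  all_goals rw [one_div_mul_eq_div]
  · have hlog := logb_le_logb_of_le one_lt_two (by positivity) (hlo n)
    rw [logb_div (by positivity) (by positivity), logb_mul hK.ne' (by positivity), logb_pow,
      logb_pow] at hlog
    rw [le_div_iff₀ (Nat.cast_pos.2 hn)]
    have hn0 : (n : ℝ) ≠ 0 := Nat.cast_ne_zero.2 hn.ne'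
    refine Eq.trans_le ?_ hlog
    rw [sub_mul, add_mul, div_mul_cancel₀ _ hn0, mul_assoc, div_mul_cancel₀ _ hn0]
    ring
  · rw [div_le_iff₀ (Nat.cast_pos.2 hn), mul_comm, ← logb_pow]
    exact logb_le_logb_of_le one_lt_two (hpos n) (hhi n)

noncomputable def erasureWeight (t : ℝ) (o : Option Bool) : ℝ :=
  if o = none then 2 ^ t else 1

lemma two_pow_card_erasures_rpow {n : ℕ} (y : Fin n → Option Bool) (t : ℝ) :
    ((2 : ℝ) ^ #{i | y i = none}) ^ t = ∏ i, erasureWeight t (y i) := by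
  rw [← rpow_natCast, ← rpow_mul zero_le_two, mul_comm, rpow_mul zero_le_two, rpow_natCast]
  simp only [erasureWeight]
  rw [prod_ite, prod_const, prod_const_one, mul_one]

lemma sum_becPr_mul_erasureWeight (ε t : ℝ) (b : Bool) :
    ∑ o, becPr ε b o * erasureWeight t o = ε * 2 ^ t + (1 - ε) := by
  cases b <;> simp [Fintype.sum_option, becPr, erasureWeight]

lemma sum_becJoint_mul_prod_erasureWeight (ε t : ℝ) (m n : ℕ) :
    ∑ x : Fin n → Bool, ∑ y : Fin m → Fin n → Option Bool,
        becJoint ε m n x y * ∏ j, ∏ i, erasureWeight t (y j i)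
      = (ε * 2 ^ t + (1 - ε)) ^ (n * m) := by
  have hx (x : Fin n → Bool) : ∑ y : Fin m → Fin n → Option Bool,
      becJoint ε m n x y * ∏ j, ∏ i, erasureWeight t (y j i)
        = (1 / 2) ^ n * (ε * 2 ^ t + (1 - ε)) ^ (n * m) := by
    simp only [becJoint, mul_assoc, ← mul_sum, ← prod_mul_distrib]
    rw [← Fintype.prod_sum fun (_ : Fin m) (z : Fin n → Option Bool) =>
      ∏ i, becPr ε (x i) (z i) * erasureWeight t (z i)]
    simp only [← Fintype.prod_sum fun i o => becPr ε (x i) o * erasureWeight t o,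
      sum_becPr_mul_erasureWeight, prod_const, card_univ, Fintype.card_fin, pow_mul]
  simp only [hx, sum_const, card_univ, Fintype.card_fun, Fintype.card_bool, Fintype.card_fin,
    nsmul_eq_mul, ← mul_assoc, Nat.cast_pow, Nat.cast_ofNat, ← mul_pow]
  norm_num

def becOutput {n : ℕ} (S : Finset (Fin n)) (x : Fin n → Bool) : Fin n → Option Bool :=
  fun i => if i ∈ S then none else some (x i)

lemma becOutput_injective {n : ℕ} (x : Fin n → Bool) :
    Function.Injective fun S : Finset (Fin n) => becOutput S x := by
  intro S S' h
  ext i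
  have := congrFun h i
  by_cases hi : i ∈ S <;> by_cases hi' : i ∈ S' <;> simp_all [becOutput]

lemma prod_becPr_becOutput (ε : ℝ) {n : ℕ} (S : Finset (Fin n)) (x : Fin n → Bool) :
    ∏ i, becPr ε (x i) (becOutput S x i) = ε ^ #S * (1 - ε) ^ (n - #S) := by
  have (i : Fin n) : becPr ε (x i) (becOutput S x i) = if i ∈ S then ε else 1 - ε := by
    by_cases hi : i ∈ S <;> simp [becOutput, becPr, hi]
  rw [prod_congr rfl fun i _ => this i, prod_ite, prod_const, prod_const, filter_mem_eq_inter,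
    univ_inter, filter_not, filter_mem_eq_inter, univ_inter, ← compl_eq_univ_sdiff, card_compl,
    Fintype.card_fin]

lemma becJoint_becOutput (ε : ℝ) {m n k : ℕ} {S : Fin m → Finset (Fin n)}
    (hS : ∀ j, #(S j) = k) (x : Fin n → Bool) :
    becJoint ε m n x (fun j => becOutput (S j) x)
      = (1 / 2) ^ n * (ε ^ k * (1 - ε) ^ (n - k)) ^ m := by
  simp only [becJoint, prod_becPr_becOutput, hS, prod_const, card_univ, Fintype.card_fin]

/-- Given the unerased coordinates of `x`, a guessing function pins `x` down by its rank. -/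
lemma card_filter_guess_becOutput_le {n : ℕ}
    (Gf : (Fin n → Option Bool) → (Fin n → Bool) → ℕ)
    (hinj : ∀ y, Function.Injective (Gf y)) (hpos : ∀ y x, 0 < Gf y x)
    (S : Finset (Fin n)) (v : ℕ) :
    #{x | Gf (becOutput S x) x ≤ v} ≤ 2 ^ (n - #S) * v := by
  let code (x : Fin n → Bool) : (↥Sᶜ → Bool) × ℕ := (fun i => x i, Gf (becOutput S x) x)
  have hcode : Set.InjOn code {x | Gf (becOutput S x) x ≤ v} := by
    intro x _ x' _ h
    simp only [code, Prod.mk.injEq] at h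
    have hout : becOutput S x = becOutput S x' := by
      funext i
      by_cases hi : i ∈ S
      · simp [becOutput, hi]
      · simpa [becOutput, hi] using congrFun h.1 ⟨i, mem_compl.2 hi⟩
    exact hinj _ (h.2.trans (congrArg (Gf · x') hout.symm))
  calc #{x | Gf (becOutput S x) x ≤ v}
      ≤ #((univ : Finset (↥Sᶜ → Bool)) ×ˢ Icc 1 v) := by
        refine card_le_card_of_injOn code (fun x hx => ?_) (by simpa using hcode)
        simp only [coe_filter, mem_univ, true_and] at hx
        simp [code, Nat.one_le_iff_ne_zero, (hpos _ x).ne', show Gf (becOutput S x) x ≤ v from hx]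
    _ = 2 ^ (n - #S) * v := by simp

/-- `E[min_j G_j(X^n | Y_(j)^n) ^ α]` for the `n`-th guessing functions `G j n`. -/
noncomputable def guessworkMoment (ε α : ℝ) {m : ℕ}
    (G : Fin m → ∀ n, (Fin n → Option Bool) → (Fin n → Bool) → ℕ) (n : ℕ) : ℝ :=
  ∑ y : Fin m → Fin n → Option Bool, ∑ x : Fin n → Bool,
    becJoint ε m n x y * ((⨅ i, G i n (y i) x : ℕ) : ℝ) ^ α

section Bounds

variable {ε α : ℝ} {m : ℕ}
  {G : Fin m → ∀ n, (Fin n → Option Bool) → (Fin n → Bool) → ℕ}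

lemma rpow_iInf_guess_le_prod_erasureWeight (hε : ε ∈ Set.Ioo (0 : ℝ) 1) (hα : 0 ≤ α)
    (hm : 0 < m) (hG : ∀ i n y, IsGuessingFunction (becCond1 ε n y) (G i n y)) {n : ℕ}
    {x : Fin n → Bool} {y : Fin m → Fin n → Option Bool}
    (hx : ∀ j, x ∈ becCompatible (y j)) :
    ((⨅ j, G j n (y j) x : ℕ) : ℝ) ^ α ≤ ∏ j, ∏ i, erasureWeight (α / m) (y j i) := by
  have : Nonempty (Fin m) := ⟨⟨0, hm⟩⟩
  refine (rpow_iInf_le_prod_rpow _ hα).trans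
    (prod_le_prod (fun _ _ => by positivity) fun j _ => ?_)
  rw [Fintype.card_fin, ← two_pow_card_erasures_rpow]
  exact rpow_le_rpow (Nat.cast_nonneg _)
    (by exact_mod_cast (hG j n (y j)).le_two_pow_card_erasures hε (hx j)) (by positivity)

theorem guessworkMoment_le (hε : ε ∈ Set.Ioo (0 : ℝ) 1) (hα : 0 ≤ α) (hm : 0 < m)
    (hG : ∀ i n y, IsGuessingFunction (becCond1 ε n y) (G i n y)) (n : ℕ) :
    guessworkMoment ε α G n ≤ (ε * 2 ^ (α / m) + (1 - ε)) ^ (n * m) := by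
  rw [guessworkMoment, sum_comm, ← sum_becJoint_mul_prod_erasureWeight]
  refine sum_le_sum fun x _ => sum_le_sum fun y _ => ?_
  by_cases h : becJoint ε m n x y = 0
  · simp [h]
  have hx (j : Fin m) : x ∈ becCompatible (y j) := by
    rw [← prod_becPr_ne_zero_iff hε]
    exact prod_ne_zero_iff.1 (right_ne_zero_of_mul h) j (mem_univ j)
  exact mul_le_mul_of_nonneg_left (rpow_iInf_guess_le_prod_erasureWeight hε hα hm hG hx)
    (becJoint_nonneg (Set.Ioo_subset_Icc_self hε) x y)

lemma sum_rpow_iInf_guess_becOutput_ge (hα : 0 ≤ α) (hm : 0 < m)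
    (hG : ∀ i n y, IsGuessingFunction (becCond1 ε n y) (G i n y)) {k n : ℕ} (hk : k ≤ n)
    (S : Fin m → Finset (Fin n)) (hS : ∀ j, #(S j) = k) :
    2 ^ n / 2 * ((2 : ℝ) ^ k / (2 * m)) ^ α
      ≤ ∑ x, ((⨅ j, G j n (becOutput (S j) x) x : ℕ) : ℝ) ^ α := by
  have : Nonempty (Fin m) := ⟨⟨0, hm⟩⟩
  have hmR : (0 : ℝ) < m := Nat.cast_pos.2 hm
  set r : ℝ := 2 ^ k / (2 * m) with hr
  have hcount : #{x | ⨅ j, G j n (becOutput (S j) x) x ≤ ⌊r⌋₊}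
      ≤ m * (2 ^ (n - k) * ⌊r⌋₊) := by
    refine (card_filter_iInf_le_le_sum _ _).trans ?_
    refine (sum_le_sum fun j _ => card_filter_guess_becOutput_le (G j n) (fun y => (hG j n y).1)
      (fun y x => (mem_Icc.1 ((hG j n y).2.1 x)).1) (S j) ⌊r⌋₊).trans ?_
    simp [hS]
  have hsmall : (#{x | ⨅ j, G j n (becOutput (S j) x) x ≤ ⌊r⌋₊} : ℝ) ≤ 2 ^ n / 2 :=
    calc (#{x | ⨅ j, G j n (becOutput (S j) x) x ≤ ⌊r⌋₊} : ℝ)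
        ≤ m * (2 ^ (n - k) * r) := by
          refine (Nat.cast_le.2 hcount).trans ?_
          push_cast
          gcongr
          exact Nat.floor_le (by positivity)
      _ = 2 ^ n / 2 := by
          rw [← pow_sub_mul_pow (2 : ℝ) hk, hr]
          field_simp
  simpa using card_div_two_mul_rpow_le_sum univ (fun x => ⨅ j, G j n (becOutput (S j) x) x)
    (by positivity) hα (by simpa using hsmall)

theorem le_guessworkMoment (hε : ε ∈ Set.Ioo (0 : ℝ) 1) (hα : 0 ≤ α) (hm : 0 < m)
    (hG : ∀ i n y, IsGuessingFunction (becCond1 ε n y) (G i n y)) {k n : ℕ} (hk : k ≤ n) :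
    ((ε * 2 ^ (α / m)) ^ k * (1 - ε) ^ (n - k) * n.choose k) ^ m / (2 * (2 * m) ^ α)
      ≤ guessworkMoment ε α G n := by
  have hmR : (0 : ℝ) < m := Nat.cast_pos.2 hm
  -- only outputs with exactly `k` erasures in every channel are kept
  set P := Fintype.piFinset fun _ : Fin m => powersetCard k (univ : Finset (Fin n))
  have hP (S) (hS : S ∈ P) (j : Fin m) : #(S j) = k :=
    (mem_powersetCard.1 (Fintype.mem_piFinset.1 hS j)).2
  have hcardP : (#P : ℝ) = (n.choose k : ℝ) ^ m := by simp [P]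
  set F : (Fin n → Bool) → (Fin m → Fin n → Option Bool) → ℝ :=
    fun x y => becJoint ε m n x y * ((⨅ i, G i n (y i) x : ℕ) : ℝ) ^ α with hF
  have hF_nonneg (x y) : 0 ≤ F x y :=
    mul_nonneg (becJoint_nonneg (Set.Ioo_subset_Icc_self hε) x y) (by positivity)
  have hembed (x : Fin n → Bool) :
      ∑ S ∈ P, F x (fun j => becOutput (S j) x) ≤ ∑ y, F x y := by
    rw [← sum_image fun S _ S' _ h => funext fun j => becOutput_injective x (congrFun h j)]
    exact sum_le_sum_of_subset_of_nonneg (subset_univ _) fun y _ _ => hF_nonneg x y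
  have hpow : ((2 : ℝ) ^ k / (2 * m)) ^ α = ((2 : ℝ) ^ (α / m)) ^ (k * m) / (2 * m) ^ α := by
    rw [div_rpow (by positivity) (by positivity), ← rpow_natCast, ← rpow_natCast,
      ← rpow_mul zero_le_two, ← rpow_mul zero_le_two]
    congr 2
    push_cast
    field_simp
  calc ((ε * 2 ^ (α / m)) ^ k * (1 - ε) ^ (n - k) * n.choose k) ^ m / (2 * (2 * m) ^ α)
      = ∑ S ∈ P, (1 / 2) ^ n * (ε ^ k * (1 - ε) ^ (n - k)) ^ m
          * (2 ^ n / 2 * ((2 : ℝ) ^ k / (2 * m)) ^ α) := by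
        rw [sum_const, nsmul_eq_mul, hcardP, hpow, one_div, inv_pow]
        field_simp
        ring
    _ ≤ ∑ S ∈ P, (1 / 2) ^ n * (ε ^ k * (1 - ε) ^ (n - k)) ^ m
          * ∑ x, ((⨅ j, G j n (becOutput (S j) x) x : ℕ) : ℝ) ^ α := by
        refine sum_le_sum fun S hS => mul_le_mul_of_nonneg_left
          (sum_rpow_iInf_guess_becOutput_ge hα hm hG hk S (hP S hS)) ?_
        have := sub_nonneg.2 hε.2.le
        have := hε.1.le
        positivity
    _ = ∑ x, ∑ S ∈ P, F x (fun j => becOutput (S j) x) := by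
        rw [sum_comm]
        refine sum_congr rfl fun S hS => ?_
        rw [mul_sum]
        exact sum_congr rfl fun x _ => by simp only [hF, becJoint_becOutput ε (hP S hS) x]
    _ ≤ guessworkMoment ε α G n := (sum_le_sum fun x _ => hembed x).trans_eq sum_comm

end Bounds

/-- Theorem 2 of the paper: the decentralized guesswork exponent with `m`
agents under BEC(`ε`) side information is `sup_{λ∈[0,1]} (αλ − m·D(λ‖ε))`. -/
theorem decentralized_bec_guesswork_exponent
    (m : ℕ) (hm : 1 ≤ m) (ε : ℝ) (hε : ε ∈ Set.Ioo (0 : ℝ) 1) (α : ℝ) (hα : 0 < α)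
    (G : Fin m → ∀ n, (Fin n → Option Bool) → (Fin n → Bool) → ℕ)
    (hG : ∀ i n y, IsGuessingFunction (becCond1 ε n y) (G i n y)) :
    Tendsto
      (fun n : ℕ => (1 / (n : ℝ)) *
        Real.logb 2 (∑ y : Fin m → Fin n → Option Bool, ∑ x : Fin n → Bool,
          becJoint ε m n x y * ((⨅ i, G i n (y i) x : ℕ) : ℝ) ^ α))
      atTop
      (nhds (⨆ lam : Set.Icc (0 : ℝ) 1, (α * (lam : ℝ) - m * Dkl lam ε))) := by
  have hmR : (0 : ℝ) < m := Nat.cast_pos.2 hm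
  have hc₀ : 0 < ε * (2 : ℝ) ^ (α / m) + (1 - ε) := by
    have := sub_pos.2 hε.2
    have := hε.1
    positivity
  have hsup : ⨆ l : Set.Icc (0 : ℝ) 1, (α * (l : ℝ) - m * Dkl l ε)
      = logb 2 ((ε * 2 ^ (α / m) + (1 - ε)) ^ m) := by
    rw [logb_pow, ← iSup_mul_sub_Dkl _ hε, Real.mul_iSup_of_nonneg hmR.le]
    congr 1 with l
    field_simp
  rw [hsup]
  refine tendsto_inv_mul_logb_of_pow_div_le_of_le_pow (pow_pos hc₀ m)
    (by positivity : (0 : ℝ) < 2 * (2 * m) ^ α) m (fun n => ?_) fun n => ?_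
  · obtain ⟨k, hk, hle⟩ := exists_add_pow_div_le_choose_mul (ε * 2 ^ (α / m)) (1 - ε) n
    calc ((ε * 2 ^ (α / m) + (1 - ε)) ^ m) ^ n / (2 * (2 * m) ^ α * (n + 1) ^ m)
        = ((ε * 2 ^ (α / m) + (1 - ε)) ^ n / (n + 1)) ^ m / (2 * (2 * m) ^ α) := by
          ring
      _ ≤ ((ε * 2 ^ (α / m)) ^ k * (1 - ε) ^ (n - k) * n.choose k) ^ m
            / (2 * (2 * m) ^ α) := by
          gcongr
      _ ≤ _ := le_guessworkMoment hε hα.le hm hG hk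
  · rw [← pow_mul, mul_comm m n]
    exact guessworkMoment_le hε hα.le hm hG n
end

section
/- Fix δ ∈ (0,1/2) and set δ̃ = δ² / (1 − 2δ(1−δ)). Then sup_{λ∈[0,1]} ( λ + (1−λ)·H_{1/2}(δ̃) − D(λ‖2δ(1−δ)) ) = log₂( 4δ(1−δ) + 1 ). -/
open Real Filter Finset

/-!
Writing `q = 2δ(1-δ)`, one has `1 - q = δ² + (1-δ)²`, so `H_{1/2}(δ̃) = -log(1-q)` and the
objective is `λ log x + (1-λ) log y - D(λ‖q)` with `x = 2`, `y = 1/(1-q)`. For any such objective,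
`λ log x + (1-λ) log y - D(λ‖q) = log Z - D(λ‖μ)` where `Z = q x + (1-q) y` and `μ = q x / Z` is
the tilted distribution, so by Gibbs' inequality the supremum is `log Z = log(1 + 2q)`, attained
at `λ = μ`.
-/

lemma sub_le_mul_log_div {x y : ℝ} (hx : 0 ≤ x) (hy : 0 < y) : x - y ≤ x * log (x / y) := by
  rcases hx.eq_or_lt with rfl | hx
  · simpa using hy.le
  have h := one_sub_inv_le_log_of_pos (div_pos hx hy)
  rw [inv_div] at h
  calc x - y = x * (1 - y / x) := by field_simp
    _ ≤ x * log (x / y) := mul_le_mul_of_nonneg_left h hx.le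

lemma mul_logb_div {b x y : ℝ} (hy : y ≠ 0) :
    x * logb b (x / y) = x * logb b x - x * logb b y := by
  rcases eq_or_ne x 0 with rfl | hx
  · simp
  · rw [logb_div hx hy, mul_sub]

lemma Dkl_self (q : ℝ) : Dkl q q = 0 := by
  have h (x : ℝ) : x * logb 2 (x / x) = 0 := by
    rcases eq_or_ne x 0 with rfl | hx <;> simp [*]
  rw [Dkl, h, h, add_zero]

lemma Dkl_nonneg {l q : ℝ} (hl0 : 0 ≤ l) (hl1 : l ≤ 1) (hq0 : 0 < q) (hq1 : q < 1) :
    0 ≤ Dkl l q := by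
  rw [Dkl, logb, logb, mul_div_assoc', mul_div_assoc', ← add_div]
  have := sub_le_mul_log_div hl0 hq0
  have := sub_le_mul_log_div (sub_nonneg.2 hl1) (sub_pos.2 hq1)
  exact div_nonneg (by linarith) (log_pos one_lt_two).le

lemma Dkl_eq_neg_binEnt_sub {q : ℝ} (hq0 : q ≠ 0) (hq1 : 1 - q ≠ 0) (l : ℝ) :
    Dkl l q = -binEnt l - l * logb 2 q - (1 - l) * logb 2 (1 - q) := by
  rw [Dkl, binEnt, mul_logb_div hq0, mul_logb_div hq1]
  ring

lemma mul_logb_add_sub_Dkl_eq {q x y : ℝ} (hq0 : 0 < q) (hq1 : q < 1) (hx : 0 < x) (hy : 0 < y)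
    (l : ℝ) :
    l * logb 2 x + (1 - l) * logb 2 y - Dkl l q =
      logb 2 (q * x + (1 - q) * y) - Dkl l (q * x / (q * x + (1 - q) * y)) := by
  have hqx : 0 < q * x := mul_pos hq0 hx
  have hqy : 0 < (1 - q) * y := mul_pos (sub_pos.2 hq1) hy
  have hZ : 0 < q * x + (1 - q) * y := add_pos hqx hqy
  have hμ : 1 - q * x / (q * x + (1 - q) * y) = (1 - q) * y / (q * x + (1 - q) * y) := by
    field_simp
    ring
  rw [Dkl_eq_neg_binEnt_sub hq0.ne' (sub_pos.2 hq1).ne',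
    Dkl_eq_neg_binEnt_sub (div_pos hqx hZ).ne' (by rw [hμ]; positivity), hμ,
    logb_div hqx.ne' hZ.ne', logb_div hqy.ne' hZ.ne', logb_mul hq0.ne' hx.ne',
    logb_mul (sub_pos.2 hq1).ne' hy.ne']
  ring

theorem ciSup_mul_logb_add_sub_Dkl {q x y : ℝ} (hq0 : 0 < q) (hq1 : q < 1) (hx : 0 < x)
    (hy : 0 < y) :
    ⨆ l : Set.Icc (0 : ℝ) 1, ((l : ℝ) * logb 2 x + (1 - l) * logb 2 y - Dkl l q) =
      logb 2 (q * x + (1 - q) * y) := by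
  simp_rw [mul_logb_add_sub_Dkl_eq hq0 hq1 hx hy]
  set μ := q * x / (q * x + (1 - q) * y)
  have hμ0 : 0 < μ := by positivity
  have hμ1 : μ < 1 := by
    rw [div_lt_one (by positivity)]
    nlinarith [mul_pos (sub_pos.2 hq1) hy]
  have hle (l : Set.Icc (0 : ℝ) 1) :
      logb 2 (q * x + (1 - q) * y) - Dkl l μ ≤ logb 2 (q * x + (1 - q) * y) :=
    sub_le_self _ (Dkl_nonneg l.2.1 l.2.2 hμ0 hμ1)
  refine le_antisymm (ciSup_le hle) ?_
  refine le_ciSup_of_le ⟨_, Set.forall_mem_range.2 hle⟩ ⟨μ, hμ0.le, hμ1.le⟩ ?_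
  rw [Dkl_self, sub_zero]

lemma Hb_half_sq_div_add_sq {a b : ℝ} (ha : 0 ≤ a) (hb : 0 ≤ b) (hs : 0 < a ^ 2 + b ^ 2) :
    Hb (1 / 2) (a ^ 2 / (a ^ 2 + b ^ 2)) = logb 2 ((a + b) ^ 2 / (a ^ 2 + b ^ 2)) := by
  have hroot : ∀ c, 0 ≤ c → (c ^ 2 / (a ^ 2 + b ^ 2)) ^ (1 / 2 : ℝ) = c / √(a ^ 2 + b ^ 2) :=
    fun c hc ↦ by rw [← sqrt_eq_rpow, sqrt_div' _ hs.le, sqrt_sq hc]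
  have hcompl : 1 - a ^ 2 / (a ^ 2 + b ^ 2) = b ^ 2 / (a ^ 2 + b ^ 2) := by
    field_simp
    ring
  have hsq : (a + b) ^ 2 / (a ^ 2 + b ^ 2) = ((a + b) / √(a ^ 2 + b ^ 2)) ^ 2 := by
    rw [div_pow, sq_sqrt hs.le]
  rw [Hb, hcompl, hroot a ha, hroot b hb, ← add_div, hsq, logb_pow]
  norm_num

/-- the variational expression for the expected centralized BSC guesswork
exponent with two agents evaluates to `log₂(4δ(1−δ)+1)`, where `δ̃ = δ²/(1−2δ(1−δ))`. -/
theorem centralized_bsc_sup_closed_form (δ : ℝ) (hδ : δ ∈ Set.Ioo (0 : ℝ) (1 / 2)) :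
    (⨆ lam : Set.Icc (0 : ℝ) 1,
      ((lam : ℝ) + (1 - (lam : ℝ)) * Hb (1 / 2) (δ ^ 2 / (1 - 2 * δ * (1 - δ)))
        - Dkl lam (2 * δ * (1 - δ))))
      = Real.logb 2 (4 * δ * (1 - δ) + 1) := by
  obtain ⟨hδ0, hδ2⟩ := hδ
  set q := 2 * δ * (1 - δ) with hq
  have hq0 : 0 < q := by nlinarith
  have hq1 : q < 1 := by nlinarith
  have h1q : 1 - q = δ ^ 2 + (1 - δ) ^ 2 := by ring
  have hH : Hb (1 / 2) (δ ^ 2 / (1 - q)) = logb 2 (1 - q)⁻¹ := by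
    rw [h1q, Hb_half_sq_div_add_sq hδ0.le (by linarith) (by positivity)]
    ring_nf
  calc _ = ⨆ l : Set.Icc (0 : ℝ) 1,
          ((l : ℝ) * logb 2 2 + (1 - l) * logb 2 (1 - q)⁻¹ - Dkl l q) := by
        simp only [hH, logb_self_eq_one one_lt_two, mul_one]
    _ = logb 2 (q * 2 + (1 - q) * (1 - q)⁻¹) :=
        ciSup_mul_logb_add_sub_Dkl hq0 hq1 two_pos (inv_pos.2 (sub_pos.2 hq1))
    _ = logb 2 (4 * δ * (1 - δ) + 1) := by
        rw [mul_inv_cancel₀ (sub_pos.2 hq1).ne', hq]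
        ring_nf
end
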